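/- For any A ∈ ℂ^{n×n}, the intersection of SRG(A) with the real line consists exactly of the real eigenvalues of A: SRG(A) ∩ ℝ = Λ(A) ∩ ℝ (restricting to nonzero points if A is singular with a non-trivially attained zero). -/

import Mathlib

open Matrix

noncomputable def srg {n : ℕ} (A : Matrix (Fin n) (Fin n) ℂ) : Set ℂ :=
  {z | ∃ x : EuclideanSpace ℂ (Fin n), x ≠ 0 ∧ Matrix.toEuclideanLin A x ≠ 0 ∧
    ∃ s : ℝ, (s = 1 ∨ s = -1) ∧
      z = ((‖Matrix.toEuclideanLin A x‖ / ‖x‖ : ℝ) : ℂ) *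
        Complex.exp (((s * Real.arccos ((inner ℂ x (Matrix.toEuclideanLin A x) : ℂ).re /
          (‖x‖ * ‖Matrix.toEuclideanLin A x‖)) : ℝ) : ℂ) * Complex.I)}

noncomputable def srgTheta {n : ℕ} (θ : ℝ) (A : Matrix (Fin n) (Fin n) ℂ) : Set ℂ :=
  (fun z => Complex.exp ((θ : ℂ) * Complex.I) * z) ''
    srg (Complex.exp (-(θ : ℂ) * Complex.I) • A)

/-
A generating point of SRG(A) is `‖Ax‖ / ‖x‖ · exp (± i θ)`, where `θ ∈ [0, π]` is the real angle
between `x` and `Ax`. It is real iff `sin θ = 0`, i.e. `θ ∈ {0, π}`, which happens exactly when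
`Ax = r x` for a nonzero real `r`; the point is then `r` itself (modulus `|r|`, phase `±1` from the
sign of `r`).
-/

open InnerProductGeometry

section SRGPoint

variable {E : Type*} [NormedAddCommGroup E] [InnerProductSpace ℂ E]

attribute [local instance] InnerProductSpace.complexToReal

-- With the real inner product `Re ⟪x, y⟫`, the `arccos` in the definition of `srg` is the
-- unoriented angle between `x` and `y`.
noncomputable def srgPoint (x y : E) (s : ℝ) : ℂ :=
  ((‖y‖ / ‖x‖ : ℝ) : ℂ) * Complex.exp (((s * angle x y : ℝ) : ℂ) * Complex.I)

lemma srgPoint_im (x y : E) (s : ℝ) :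
    (srgPoint x y s).im = ‖y‖ / ‖x‖ * Real.sin (s * angle x y) := by
  rw [srgPoint, Complex.im_ofReal_mul, Complex.exp_ofReal_mul_I_im]

lemma srgPoint_ofReal_smul {x : E} (hx : x ≠ 0) {r : ℝ} (hr : r ≠ 0) {s : ℝ}
    (hs : s = 1 ∨ s = -1) : srgPoint x ((r : ℂ) • x) s = r := by
  rw [Complex.coe_smul, srgPoint, norm_smul, Real.norm_eq_abs,
    mul_div_cancel_right₀ _ (norm_ne_zero_iff.2 hx)]
  rcases hr.lt_or_gt with hneg | hpos
  · rw [angle_smul_right_of_neg _ _ hneg, angle_self_neg_of_nonzero hx, abs_of_neg hneg]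
    rcases hs with rfl | rfl <;> simp [Complex.exp_pi_mul_I]
  · rw [angle_smul_right_of_pos _ _ hpos, angle_self hx, abs_of_pos hpos]
    simp

lemma srgPoint_im_eq_zero_iff {x y : E} (hx : x ≠ 0) (hy : y ≠ 0) {s : ℝ}
    (hs : s = 1 ∨ s = -1) : (srgPoint x y s).im = 0 ↔ ∃ r : ℝ, r ≠ 0 ∧ y = (r : ℂ) • x := by
  have hsin : Real.sin (s * angle x y) = 0 ↔ Real.sin (angle x y) = 0 := by
    rcases hs with rfl | rfl <;> simp
  constructor
  · intro him
    rw [srgPoint_im, mul_eq_zero, or_iff_right (div_ne_zero (norm_ne_zero_iff.2 hy)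
      (norm_ne_zero_iff.2 hx)), hsin, sin_eq_zero_iff_angle_eq_zero_or_angle_eq_pi,
      angle_eq_zero_iff, angle_eq_pi_iff] at him
    rcases him with ⟨-, r, hr, rfl⟩ | ⟨-, r, hr, rfl⟩
    · exact ⟨r, hr.ne', (Complex.coe_smul r x).symm⟩
    · exact ⟨r, hr.ne, (Complex.coe_smul r x).symm⟩
  · rintro ⟨r, hr, rfl⟩
    rw [srgPoint_ofReal_smul hx hr hs, Complex.ofReal_im]

end SRGPoint

lemma mem_srg_iff {n : ℕ} (A : Matrix (Fin n) (Fin n) ℂ) (z : ℂ) :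
    z ∈ srg A ↔ ∃ x, x ≠ 0 ∧ toEuclideanLin A x ≠ 0 ∧
      ∃ s : ℝ, (s = 1 ∨ s = -1) ∧ z = srgPoint x (toEuclideanLin A x) s :=
  Iff.rfl

lemma mem_spectrum_iff_exists_toEuclideanLin_eq_smul {n : ℕ} (A : Matrix (Fin n) (Fin n) ℂ)
    (z : ℂ) : z ∈ spectrum ℂ A ↔ ∃ x, toEuclideanLin A x = z • x ∧ x ≠ 0 := by
  rw [← Matrix.spectrum_toLpLin 2, ← Module.End.hasEigenvalue_iff_mem_spectrum,
    Module.End.hasEigenvalue_iff, Submodule.ne_bot_iff]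
  simp only [Module.End.mem_eigenspace_iff]

/-- SRG(A) ∩ ℝ consists exactly of the nonzero real eigenvalues of A. -/
theorem stmt15 {n : ℕ} (A : Matrix (Fin n) (Fin n) ℂ) :
    srg A ∩ {z : ℂ | z.im = 0} =
      {z : ℂ | z.im = 0 ∧ z ∈ spectrum ℂ A ∧ z ≠ 0} := by
  ext z
  simp only [Set.mem_inter_iff, Set.mem_ofPred_eq, mem_srg_iff,
    mem_spectrum_iff_exists_toEuclideanLin_eq_smul]
  constructor
  · rintro ⟨⟨x, hx, hAx, s, hs, rfl⟩, him⟩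
    obtain ⟨r, hr0, hr⟩ := (srgPoint_im_eq_zero_iff hx hAx hs).1 him
    rw [hr, srgPoint_ofReal_smul hx hr0 hs]
    exact ⟨Complex.ofReal_im r, ⟨x, hr, hx⟩, Complex.ofReal_ne_zero.2 hr0⟩
  · rintro ⟨him, ⟨x, hAx, hx⟩, hz⟩
    obtain ⟨r, rfl⟩ : ∃ r : ℝ, z = r := ⟨z.re, Complex.ext rfl (by simp [him])⟩
    have hr0 : r ≠ 0 := Complex.ofReal_ne_zero.1 hz
    refine ⟨⟨x, hx, hAx ▸ smul_ne_zero hz hx, 1, Or.inl rfl, ?_⟩, him⟩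
    rw [hAx, srgPoint_ofReal_smul hx hr0 (Or.inl rfl)]
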